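/- Assume {y_k}_{k=1}^m strictly interlaces {x_j}_{j=1}^n. A vector ω ∈ ℝ^n with all entries strictly positive satisfies ∑_{j=1}^n ω_j P_m(x_j) x_j^k = 0 for k = 0,…,m−1 if and only if ω admits a representation ω = ∑_{J ∈ 𝔍₊} t_J ω^{(J)} with coefficients t_J ≥ 0 such that for every index j ∈ {1,…,n} there exists at least one J ∈ 𝔍₊ with j ∈ J and t_J > 0. -/

import Mathlib

open Polynomial Finset

/-- `Pm m y` is the monic polynomial `P_m(t) = ∏_{k=1}^m (t - y_k)` (1-based indexing). -/
noncomputable def Pm (m : ℕ) (y : ℕ → ℝ) (t : ℝ) : ℝ := ∏ k ∈ Finset.Icc 1 m, (t - y k)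

/-- The circuit vector `ω^{(J)} ∈ ℝⁿ` associated with a subset `J ⊆ {1,…,n}`. -/
noncomputable def circuitR (n m : ℕ) (x y : ℕ → ℝ) (J : Finset (Fin n)) : Fin n → ℝ :=
  fun j => if j ∈ J then
    1 / (Pm m y (x ((j : ℕ) + 1)) *
      ∏ j' ∈ J.erase j, (x ((j : ℕ) + 1) - x ((j' : ℕ) + 1)))
  else 0

/-- The band `I_r = {i_r + 1, …, i_{r+1}}` realised inside `Fin n` (1-based indices). -/
def bandR (n : ℕ) (i : ℕ → ℕ) (r : ℕ) : Finset (Fin n) :=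
  Finset.univ.filter (fun j => i r + 1 ≤ (j : ℕ) + 1 ∧ (j : ℕ) + 1 ≤ i (r + 1))

/-- `J ∈ 𝔍₊`: `|J| = m+1` and `J` meets each band `I_r` exactly once. -/
def JPlusR (n m : ℕ) (i : ℕ → ℕ) (J : Finset (Fin n)) : Prop :=
  J.card = m + 1 ∧ ∀ r, r ≤ m → (J ∩ bandR n i r).card = 1

lemma leadingCoeff_lagrange_basis {ι : Type*} [DecidableEq ι] (s : Finset ι) (v : ι → ℝ)
    (hv : Set.InjOn v s) {i : ι} (hi : i ∈ s) :
    (Lagrange.basis s v i).leadingCoeff = ∏ j ∈ s.erase i, (v i - v j)⁻¹ := by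
  rw [Lagrange.basis, leadingCoeff_prod]
  refine Finset.prod_congr rfl fun j hj => ?_
  have hij : v i ≠ v j := fun h =>
    (Finset.mem_erase.mp hj).1 ((hv (Finset.mem_of_mem_erase hj) hi h.symm))
  rw [Lagrange.basisDivisor, leadingCoeff_mul, leadingCoeff_C, leadingCoeff_X_sub_C, mul_one]

lemma lagrange_sum_zero {ι : Type*} [DecidableEq ι] (s : Finset ι) (v : ι → ℝ)
    (hv : Set.InjOn v s) (k : ℕ) (hk : k + 1 < s.card) :
    ∑ j ∈ s, v j ^ k * (∏ j' ∈ s.erase j, (v j - v j'))⁻¹ = 0 := by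
  have hdeg : (X ^ k : ℝ[X]).degree < s.card := by
    rw [degree_X_pow]
    exact_mod_cast Nat.lt_of_succ_lt hk
  have h := Lagrange.eq_interpolate (f := (X ^ k : ℝ[X])) hv hdeg
  have hc := congrArg (fun p => Polynomial.coeff p (s.card - 1)) h
  simp only [Lagrange.interpolate_apply, Polynomial.finset_sum_coeff, coeff_C_mul,
    coeff_X_pow] at hc
  rw [if_neg (by omega : ¬ (#s - 1 = k))] at hc
  refine Eq.trans (Finset.sum_congr rfl fun i hi => ?_) hc.symm
  rw [eval_pow, eval_X]
  congr 1
  symm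
  have hdb : (Lagrange.basis s v i).degree = (s.card - 1 : ℕ) := Lagrange.degree_basis hv hi
  have hnd : (Lagrange.basis s v i).natDegree = s.card - 1 := natDegree_eq_of_degree_eq_some hdb
  rw [← hnd, ← Polynomial.leadingCoeff, leadingCoeff_lagrange_basis s v hv hi,
    ← Finset.prod_inv_distrib]

/-- product of negatives is `(-1)^card` times a positive. -/
lemma prod_neg_sign {ι : Type*} (T : Finset ι) (f : ι → ℝ) (hf : ∀ k ∈ T, f k < 0) :
    0 < (-1 : ℝ) ^ T.card * ∏ k ∈ T, f k := by
  have : ∏ k ∈ T, f k = (-1 : ℝ) ^ T.card * ∏ k ∈ T, (-(f k)) := by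
    rw [← Finset.prod_const, ← Finset.prod_mul_distrib]
    exact Finset.prod_congr rfl fun k _ => by ring
  rw [this, ← mul_assoc, ← mul_pow]
  simp only [neg_mul_neg, one_mul, one_pow]
  exact Finset.prod_pos fun k hk => neg_pos.mpr (hf k hk)

section Setup

variable {m n : ℕ} {x y : ℕ → ℝ} {i : ℕ → ℕ}
variable (hm : 1 ≤ m) (hmn : m < n)
variable (hx : ∀ j j', 1 ≤ j → j < j' → j' ≤ n → x j < x j')
variable (hy : ∀ k k', 1 ≤ k → k < k' → k' ≤ m → y k < y k')
variable (hxy : ∀ j k, 1 ≤ j → j ≤ n → 1 ≤ k → k ≤ m → x j ≠ y k)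
variable (hi0 : i 0 = 0) (hin : i (m + 1) = n)
variable (himono : ∀ r, r ≤ m → i r < i (r + 1))
variable (hinter : ∀ k, 1 ≤ k → k ≤ m → x (i k) < y k ∧ y k < x (i k + 1))

include himono in
/-- monotonicity of the index sequence. -/
lemma imono : ∀ r s : ℕ, r ≤ s → s ≤ m + 1 → i r ≤ i s := by
  intro r s hrs hsm
  induction s with
  | zero =>
      have : r = 0 := by omega
      simp [this]
  | succ s ih =>
      rcases Nat.lt_or_ge r (s+1) with h | h
      · have h1 : i r ≤ i s := ih (by omega) (by omega)
        have := himono s (by omega)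
        omega
      · have : r = s + 1 := by omega
        simp [this]

include himono in
lemma istrict : ∀ r s : ℕ, r < s → s ≤ m + 1 → i r < i s := by
  intro r s hrs hsm
  have h1 := himono r (by omega)
  have h2 := imono himono (r+1) s (by omega) hsm
  omega

lemma mem_bandR {j : Fin n} {r : ℕ} :
    j ∈ bandR n i r ↔ i r ≤ (j : ℕ) ∧ (j : ℕ) < i (r + 1) := by
  simp [bandR]

include hx in
lemma xmono : ∀ a b : ℕ, 1 ≤ a → a ≤ b → b ≤ n → x a ≤ x b := by
  intro a b h1 hab hbn
  rcases Nat.lt_or_ge a b with h | h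
  · exact le_of_lt (hx a b h1 h hbn)
  · have : a = b := by omega
    simp [this]

include hi0 hin in
/-- each index lies in some band. -/
lemma band_exists (j : Fin n) : ∃ r, r ≤ m ∧ j ∈ bandR n i r := by
  classical
  set r := Nat.findGreatest (fun r => i r ≤ (j : ℕ)) m with hr
  have h0 : i 0 ≤ (j : ℕ) := by omega
  have hrle : r ≤ m := Nat.findGreatest_le m
  have hspec : i r ≤ (j : ℕ) :=
    Nat.findGreatest_spec (P := fun r => i r ≤ (j : ℕ)) (Nat.zero_le m) h0
  refine ⟨r, hrle, mem_bandR.mpr ⟨hspec, ?_⟩⟩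
  rcases Nat.lt_or_ge r m with h | h
  · by_contra hcon
    push_neg at hcon
    exact Nat.findGreatest_is_greatest (Nat.lt_succ_self r) (by omega) hcon
  · have hrm : r = m := by omega
    have hj : (j : ℕ) < n := j.2
    rw [hrm]
    omega

include himono in
/-- bands are pairwise disjoint (uniqueness of band). -/
lemma band_unique {j : Fin n} {r r' : ℕ} (hr : r ≤ m) (hr' : r' ≤ m)
    (h1 : j ∈ bandR n i r) (h2 : j ∈ bandR n i r') : r = r' := by
  rw [mem_bandR] at h1 h2
  by_contra hne
  rcases Nat.lt_or_ge r r' with h | h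
  · have := imono himono (r+1) r' (by omega) (by omega)
    omega
  · have := imono himono (r'+1) r (by omega) (by omega)
    omega

include hx hin himono hinter in
/-- separation: on band `s`, `x_j > y_k ↔ k ≤ s`. -/
lemma sep {j : Fin n} {s : ℕ} (hs : s ≤ m) (hj : j ∈ bandR n i s) :
    ∀ k, 1 ≤ k → k ≤ m → (k ≤ s → y k < x ((j : ℕ) + 1)) ∧ (s < k → x ((j : ℕ) + 1) < y k) := by
  intro k hk1 hkm
  rw [mem_bandR] at hj
  have hjn : (j : ℕ) < n := j.2
  constructor
  · intro hks
    have h1 : y k < x (i k + 1) := (hinter k hk1 hkm).2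
    have h2 : x (i k + 1) ≤ x ((j : ℕ) + 1) := by
      refine xmono hx (i k + 1) ((j : ℕ) + 1) (by omega) ?_ (by omega)
      have := imono himono k s hks (by omega)
      omega
    linarith
  · intro hsk
    have h1 : x (i k) < y k := (hinter k hk1 hkm).1
    have h2 : x ((j : ℕ) + 1) ≤ x (i k) := by
      have hik : i k ≤ n := by
        have := imono himono k (m+1) (by omega) (le_refl _)
        omega
      refine xmono hx ((j : ℕ) + 1) (i k) (by omega) ?_ hik
      have := imono himono (s+1) k hsk (by omega)
      omega
    linarith

include hxy in
lemma Pm_ne_zero {j : Fin n} : Pm m y (x ((j : ℕ) + 1)) ≠ 0 := by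
  have hjn : (j : ℕ) < n := j.2
  refine Finset.prod_ne_zero_iff.mpr fun k hk => ?_
  rw [Finset.mem_Icc] at hk
  exact sub_ne_zero.mpr (hxy ((j : ℕ) + 1) k (by omega) (by omega) hk.1 hk.2)

include hx hin himono hinter in
/-- sign of `P_m` on band `s`. -/
lemma Pm_sign {j : Fin n} {s : ℕ} (hs : s ≤ m) (hj : j ∈ bandR n i s) :
    0 < (-1 : ℝ) ^ (m - s) * Pm m y (x ((j : ℕ) + 1)) := by
  have hsep := sep hx hin himono hinter hs hj
  have hsplit : Pm m y (x ((j : ℕ) + 1)) =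
      (∏ k ∈ Finset.Ioc 0 s, (x ((j : ℕ) + 1) - y k)) *
      ∏ k ∈ Finset.Ioc s m, (x ((j : ℕ) + 1) - y k) := by
    have hIcc : Finset.Icc 1 m = Finset.Ioc 0 m := Finset.Icc_add_one_left_eq_Ioc 0 m
    rw [Pm, hIcc]
    exact (Finset.prod_Ioc_consecutive _ (Nat.zero_le s) hs).symm
  rw [hsplit, mul_comm ((-1:ℝ) ^ (m - s)) _, mul_assoc]
  have hpos : 0 < ∏ k ∈ Finset.Ioc 0 s, (x ((j : ℕ) + 1) - y k) := by
    refine Finset.prod_pos fun k hk => ?_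
    rw [Finset.mem_Ioc] at hk
    have := (hsep k hk.1 (by omega)).1 hk.2
    linarith
  refine mul_pos hpos ?_
  rw [mul_comm]
  have hcard : (Finset.Ioc s m).card = m - s := by rw [Nat.card_Ioc]
  rw [← hcard]
  refine prod_neg_sign _ _ fun k hk => ?_
  rw [Finset.mem_Ioc] at hk
  have := (hsep k (by omega) hk.2).2 hk.1
  linarith

include hx in
/-- `x ∘ succ` is injective on `Fin n`. -/
lemma X_injOn : ∀ j j' : Fin n, x ((j : ℕ) + 1) = x ((j' : ℕ) + 1) → j = j' := by
  intro j j' h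
  by_contra hne
  have hne' : (j : ℕ) ≠ (j' : ℕ) := fun hc => hne (Fin.ext hc)
  rcases Nat.lt_or_ge (j : ℕ) (j' : ℕ) with hlt | hge
  · have := hx ((j:ℕ)+1) ((j':ℕ)+1) (by omega) (by omega) (by omega)
    linarith
  · have := hx ((j':ℕ)+1) ((j:ℕ)+1) (by omega) (by omega) (by omega)
    linarith

include hx hxy in
/-- the circuit vector of any `J ∈ 𝔍₊` solves the system. -/
lemma circuit_solution {J : Finset (Fin n)} (hJ : J.card = m + 1) (k : ℕ) (hk : k < m) :
    ∑ j : Fin n, circuitR n m x y J j * Pm m y (x ((j : ℕ) + 1)) * x ((j : ℕ) + 1) ^ k = 0 := by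
  classical
  have hsub : ∑ j ∈ J, circuitR n m x y J j * Pm m y (x ((j : ℕ) + 1)) * x ((j : ℕ) + 1) ^ k
      = ∑ j : Fin n, circuitR n m x y J j * Pm m y (x ((j : ℕ) + 1)) * x ((j : ℕ) + 1) ^ k := by
    refine Finset.sum_subset (Finset.subset_univ J) fun j _ hj => ?_
    simp [circuitR, hj]
  rw [← hsub]
  have hinj : Set.InjOn (fun j : Fin n => x ((j : ℕ) + 1)) J :=
    fun a _ b _ hab => X_injOn hx a b hab
  have hlag : ∑ j ∈ J, x ((j : ℕ) + 1) ^ k *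
      (∏ j' ∈ J.erase j, (x ((j : ℕ) + 1) - x ((j' : ℕ) + 1)))⁻¹ = 0 :=
    lagrange_sum_zero J (fun j : Fin n => x ((j : ℕ) + 1)) hinj k (by omega)
  rw [← hlag]
  refine Finset.sum_congr rfl fun j hj => ?_
  have hP : Pm m y (x ((j : ℕ) + 1)) ≠ 0 := Pm_ne_zero hxy (j := j)
  rw [circuitR, if_pos hj, one_div, mul_inv]
  rw [show (Pm m y (x ((j : ℕ) + 1)))⁻¹ *
        (∏ j' ∈ J.erase j, (x ((j : ℕ) + 1) - x ((j' : ℕ) + 1)))⁻¹ *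
        Pm m y (x ((j : ℕ) + 1)) * x ((j : ℕ) + 1) ^ k
      = x ((j : ℕ) + 1) ^ k * (∏ j' ∈ J.erase j, (x ((j : ℕ) + 1) - x ((j' : ℕ) + 1)))⁻¹ *
        ((Pm m y (x ((j : ℕ) + 1)))⁻¹ * Pm m y (x ((j : ℕ) + 1))) from by ring,
    inv_mul_cancel₀ hP, mul_one]

include hx hi0 hin himono hinter in
/-- positivity of circuit entries for `J ∈ 𝔍₊`. -/
lemma circuit_pos' {J : Finset (Fin n)} (hJ : JPlusR n m i J) {j : Fin n} (hj : j ∈ J)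
    {s : ℕ} (hs : s ≤ m) (hjb : j ∈ bandR n i s) :
    0 < circuitR n m x y J j := by
  classical
  have hP := Pm_sign hx hin himono hinter hs hjb
  set T := J.erase j with hT
  set Tneg := T.filter (fun j' : Fin n => (j : ℕ) < (j' : ℕ)) with hTneg
  have hTneg_eq : Tneg = (Finset.Ioc s m).biUnion (fun r => J ∩ bandR n i r) := by
    ext j'
    simp only [hTneg, Finset.mem_filter, hT, Finset.mem_erase, Finset.mem_biUnion,
      Finset.mem_Ioc, Finset.mem_inter]
    constructor
    · rintro ⟨⟨hne, hmem⟩, hlt⟩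
      obtain ⟨r', hr', hjb'⟩ := band_exists hi0 hin j'
      refine ⟨r', ⟨?_, hr'⟩, hmem, hjb'⟩
      by_contra hcon
      push_neg at hcon
      rcases Nat.lt_or_ge r' s with hlt' | hge'
      · rw [mem_bandR] at hjb hjb'
        have := imono himono (r'+1) s (by omega) (by omega)
        omega
      · have hr's : r' = s := by omega
        rw [hr's] at hjb'
        have hcard := hJ.2 s hs
        have := Finset.card_le_one.mp (le_of_eq hcard) j'
          (Finset.mem_inter.mpr ⟨hmem, hjb'⟩) j (Finset.mem_inter.mpr ⟨hj, hjb⟩)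
        exact hne this
    · rintro ⟨r, ⟨hsr, hrm⟩, hmem, hjb'⟩
      rw [mem_bandR] at hjb hjb'
      have := imono himono (s+1) r hsr (by omega)
      have hlt : (j : ℕ) < (j' : ℕ) := by omega
      exact ⟨⟨fun hc => by simp [hc] at hlt, hmem⟩, hlt⟩
  have hcardTneg : Tneg.card = m - s := by
    rw [hTneg_eq, Finset.card_biUnion]
    · rw [Finset.sum_congr rfl fun r hr => hJ.2 r (Finset.mem_Ioc.mp hr).2]
      simp [Nat.card_Ioc]
    · intro r hr r' hr' hne
      rw [Finset.mem_coe, Finset.mem_Ioc] at hr hr'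
      refine Finset.disjoint_left.mpr fun a ha ha' => ?_
      rw [Finset.mem_inter] at ha ha'
      exact hne (band_unique himono hr.2 hr'.2 ha.2 ha'.2)
  have hQsplit : (∏ j' ∈ T, (x ((j : ℕ) + 1) - x ((j' : ℕ) + 1)))
      = (∏ j' ∈ Tneg, (x ((j : ℕ) + 1) - x ((j' : ℕ) + 1))) *
        ∏ j' ∈ T.filter (fun j' : Fin n => ¬ ((j : ℕ) < (j' : ℕ))),
          (x ((j : ℕ) + 1) - x ((j' : ℕ) + 1)) :=
    (Finset.prod_filter_mul_prod_filter_not T (fun j' : Fin n => (j : ℕ) < (j' : ℕ)) _).symm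
  have hQ : 0 < (-1 : ℝ) ^ (m - s) * ∏ j' ∈ T, (x ((j : ℕ) + 1) - x ((j' : ℕ) + 1)) := by
    rw [hQsplit, ← mul_assoc]
    refine mul_pos ?_ ?_
    · rw [← hcardTneg]
      refine prod_neg_sign _ _ fun j' hj' => ?_
      rw [hTneg, Finset.mem_filter] at hj'
      have hj'n : (j' : ℕ) < n := j'.2
      have := hx ((j : ℕ) + 1) ((j' : ℕ) + 1) (by omega) (by omega) (by omega)
      linarith
    · refine Finset.prod_pos fun j' hj' => ?_
      rw [Finset.mem_filter, hT, Finset.mem_erase] at hj'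
      have hne : (j' : ℕ) ≠ (j : ℕ) := fun hc => hj'.1.1 (Fin.ext hc)
      have hlt : (j' : ℕ) < (j : ℕ) := by omega
      have hjn : (j : ℕ) < n := j.2
      have := hx ((j' : ℕ) + 1) ((j : ℕ) + 1) (by omega) (by omega) (by omega)
      linarith
  rw [circuitR, if_pos hj]
  refine one_div_pos.mpr ?_
  have h11 : ((-1 : ℝ) ^ (m - s)) * ((-1 : ℝ) ^ (m - s)) = 1 := by
    rw [← mul_pow]
    norm_num
  have hPQ : Pm m y (x ((j : ℕ) + 1)) * ∏ j' ∈ J.erase j, (x ((j : ℕ) + 1) - x ((j' : ℕ) + 1))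
      = ((-1 : ℝ) ^ (m - s) * Pm m y (x ((j : ℕ) + 1))) *
        ((-1 : ℝ) ^ (m - s) * ∏ j' ∈ T, (x ((j : ℕ) + 1) - x ((j' : ℕ) + 1))) := by
    rw [hT]
    rw [show ∀ a b c : ℝ, (a * b) * (a * c) = (a * a) * (b * c) from fun a b c => by ring,
      h11, one_mul]
  rw [hPQ]
  exact mul_pos hP hQ

include hx hi0 hin himono hinter in
lemma circuit_pos {J : Finset (Fin n)} (hJ : JPlusR n m i J) {j : Fin n} (hj : j ∈ J) :
    0 < circuitR n m x y J j := by
  obtain ⟨s, hs, hjb⟩ := band_exists hi0 hin j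
  exact circuit_pos' hx hi0 hin himono hinter hJ hj hs hjb

include hm hx hxy hi0 hin himono hinter in
/-- a nonzero nonnegative solution hits every band. -/
lemma band_hit (ω' : Fin n → ℝ) (hnn : ∀ j, 0 ≤ ω' j)
    (hsol : ∀ k, k < m →
      ∑ j : Fin n, ω' j * Pm m y (x ((j : ℕ) + 1)) * x ((j : ℕ) + 1) ^ k = 0)
    (hne : ∃ j₀, ω' j₀ ≠ 0) (r : ℕ) (hr : r ≤ m) :
    ∃ j, j ∈ bandR n i r ∧ ω' j ≠ 0 := by
  classical
  by_contra hcon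
  push_neg at hcon
  -- every point of band r has ω' = 0
  have hband0 : ∀ j : Fin n, j ∈ bandR n i r → ω' j = 0 := hcon
  set Kc : Finset ℕ := ({r, r + 1} : Finset ℕ) ∩ Finset.Icc 1 m with hKc
  set K : Finset ℕ := Finset.Icc 1 m \ Kc with hK
  set ε : ℝ := if r < m then 1 else -1 with hε
  have hKcsub : Kc ⊆ Finset.Icc 1 m := Finset.inter_subset_right
  have hKccard : 1 ≤ Kc.card := by
    rcases Nat.eq_zero_or_pos r with hr0 | hrpos
    · refine Finset.card_pos.mpr ⟨1, ?_⟩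
      rw [hKc, Finset.mem_inter, Finset.mem_insert, Finset.mem_singleton, Finset.mem_Icc]
      omega
    · refine Finset.card_pos.mpr ⟨r, ?_⟩
      rw [hKc, Finset.mem_inter, Finset.mem_insert, Finset.mem_singleton, Finset.mem_Icc]
      omega
  -- the test polynomial
  set Q : Polynomial ℝ := ∏ k ∈ K, (Polynomial.X - Polynomial.C (y k)) with hQ
  have hQdeg : Q.natDegree < m := by
    rw [hQ, natDegree_prod _ _ fun k _ => X_sub_C_ne_zero (y k)]
    have h1 : ∀ k ∈ K, (Polynomial.X - Polynomial.C (y k)).natDegree = 1 :=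
      fun k _ => natDegree_X_sub_C (y k)
    rw [Finset.sum_congr rfl h1, Finset.sum_const, smul_eq_mul, mul_one]
    have : K.card = m - Kc.card := by
      rw [hK, Finset.card_sdiff_of_subset hKcsub, Nat.card_Icc]
      omega
    omega
  have hQeval : ∀ t : ℝ, Q.eval t = ∏ k ∈ K, (t - y k) := by
    intro t
    rw [hQ, Polynomial.eval_prod]
    exact Finset.prod_congr rfl fun k _ => by simp
  -- the sum vanishes
  have hS : ∑ j : Fin n, ω' j * Pm m y (x ((j : ℕ) + 1)) * Q.eval (x ((j : ℕ) + 1)) = 0 := by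
    have hexp : ∀ j : Fin n, ω' j * Pm m y (x ((j : ℕ) + 1)) * Q.eval (x ((j : ℕ) + 1)) =
        ∑ k ∈ Finset.range m, Q.coeff k *
          (ω' j * Pm m y (x ((j : ℕ) + 1)) * x ((j : ℕ) + 1) ^ k) := by
      intro j
      rw [Polynomial.eval_eq_sum_range' hQdeg, Finset.mul_sum]
      exact Finset.sum_congr rfl fun k _ => by ring
    rw [Finset.sum_congr rfl fun j _ => hexp j, Finset.sum_comm]
    refine Finset.sum_eq_zero fun k hk => ?_
    rw [← Finset.mul_sum, hsol k (Finset.mem_range.mp hk), mul_zero]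
  -- key sign fact for indices outside band r
  have hsign : ∀ j : Fin n, 0 ≤ ε * (ω' j * Pm m y (x ((j : ℕ) + 1)) * Q.eval (x ((j : ℕ) + 1)))
      ∧ (ω' j ≠ 0 → 0 < ε * (ω' j * Pm m y (x ((j : ℕ) + 1)) * Q.eval (x ((j : ℕ) + 1)))) := by
    intro j
    obtain ⟨s, hs, hjb⟩ := band_exists hi0 hin j
    rcases eq_or_ne s r with hsr | hsr
    · have h0 : ω' j = 0 := hband0 j (hsr ▸ hjb)
      rw [h0]
      simp
    -- j is in band s ≠ r
    · have hsep := sep hx hin himono hinter hs hjb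
      have hsplitP : Pm m y (x ((j : ℕ) + 1)) =
          (∏ k ∈ K, (x ((j : ℕ) + 1) - y k)) * ∏ k ∈ Kc, (x ((j : ℕ) + 1) - y k) := by
        rw [Pm, ← Finset.prod_sdiff hKcsub, ← hK]
      have hDsign : 0 < ε * ∏ k ∈ Kc, (x ((j : ℕ) + 1) - y k) := by
        rcases Nat.lt_or_ge r s with hrs | hsr'
        -- s > r : all factors positive, and r < m so ε = 1
        · have hrm : r < m := by omega
          rw [hε, if_pos hrm, one_mul]
          refine Finset.prod_pos fun k hk => ?_
          rw [hKc, Finset.mem_inter, Finset.mem_insert, Finset.mem_singleton,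
            Finset.mem_Icc] at hk
          have := (hsep k (by omega) (by omega)).1 (by omega)
          linarith
        -- s < r : all factors negative
        · have hslt : s < r := by omega
          have hneg : ∀ k ∈ Kc, (x ((j : ℕ) + 1) - y k) < 0 := by
            intro k hk
            rw [hKc, Finset.mem_inter, Finset.mem_insert, Finset.mem_singleton,
              Finset.mem_Icc] at hk
            have := (hsep k (by omega) (by omega)).2 (by omega)
            linarith
          have hps := prod_neg_sign Kc _ hneg
          have hcard : ε = (-1 : ℝ) ^ Kc.card := by
            rcases Nat.lt_or_ge r m with hrm | hrm
            · have hKc2 : Kc = {r, r + 1} := by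
                rw [hKc]
                refine Finset.inter_eq_left.mpr fun k hk => ?_
                rw [Finset.mem_insert, Finset.mem_singleton] at hk
                rw [Finset.mem_Icc]
                omega
              rw [hε, if_pos hrm, hKc2, Finset.card_insert_of_notMem (by simp),
                Finset.card_singleton]
              norm_num
            · have hrm' : r = m := by omega
              have hKc1 : Kc = {m} := by
                rw [hKc]
                ext k
                rw [Finset.mem_inter, Finset.mem_insert, Finset.mem_singleton,
                  Finset.mem_Icc, Finset.mem_singleton]
                omega
              rw [hε, if_neg (by omega), hKc1, Finset.card_singleton]
              norm_num
          rw [hcard]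
          exact hps
      have hterm : ε * (ω' j * Pm m y (x ((j : ℕ) + 1)) * Q.eval (x ((j : ℕ) + 1)))
          = ω' j * (∏ k ∈ K, (x ((j : ℕ) + 1) - y k)) ^ 2 *
            (ε * ∏ k ∈ Kc, (x ((j : ℕ) + 1) - y k)) := by
        rw [hQeval, hsplitP]
        ring
      constructor
      · rw [hterm]
        refine mul_nonneg (mul_nonneg (hnn j) (sq_nonneg _)) (le_of_lt hDsign)
      · intro hjne
        rw [hterm]
        refine mul_pos (mul_pos (lt_of_le_of_ne (hnn j) (Ne.symm hjne)) ?_) hDsign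
        have hKne : ∀ k ∈ K, (x ((j : ℕ) + 1) - y k) ≠ 0 := by
          intro k hk
          rw [hK, Finset.mem_sdiff, Finset.mem_Icc] at hk
          have hjn : (j : ℕ) < n := j.2
          exact sub_ne_zero.mpr (hxy ((j : ℕ) + 1) k (by omega) (by omega) hk.1.1 hk.1.2)
        have hne0 : (∏ k ∈ K, (x ((j : ℕ) + 1) - y k)) ≠ 0 :=
          Finset.prod_ne_zero_iff.mpr hKne
        exact lt_of_le_of_ne (sq_nonneg _) (Ne.symm (pow_ne_zero 2 hne0))
  obtain ⟨j₀, hj₀⟩ := hne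
  have hsum : 0 < ∑ j : Fin n,
      ε * (ω' j * Pm m y (x ((j : ℕ) + 1)) * Q.eval (x ((j : ℕ) + 1))) :=
    Finset.sum_pos' (fun j _ => (hsign j).1) ⟨j₀, Finset.mem_univ j₀, (hsign j₀).2 hj₀⟩
  rw [← Finset.mul_sum, hS, mul_zero] at hsum
  exact lt_irrefl 0 hsum

include hm hmn hx hxy hi0 hin himono hinter in
/-- decomposition of nonnegative solutions. -/
lemma decomp : ∀ c : ℕ, ∀ ω' : Fin n → ℝ,
    (Finset.univ.filter (fun j => ω' j ≠ 0)).card ≤ c →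
    (∀ j, 0 ≤ ω' j) →
    (∀ k, k < m →
      ∑ j : Fin n, ω' j * Pm m y (x ((j : ℕ) + 1)) * x ((j : ℕ) + 1) ^ k = 0) →
    ∃ t : Finset (Fin n) → ℝ,
      (∀ J, 0 ≤ t J) ∧ (∀ J, t J ≠ 0 → JPlusR n m i J) ∧
      ω' = ∑ J : Finset (Fin n), t J • circuitR n m x y J := by
  classical
  intro c
  induction c with
  | zero =>
      intro ω' hcard hnn hsol
      have hzero : ∀ j, ω' j = 0 := by
        intro j
        by_contra hj
        have : j ∈ Finset.univ.filter (fun j => ω' j ≠ 0) := by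
          simp [hj]
        have := Finset.card_pos.mpr ⟨j, this⟩
        omega
      refine ⟨0, fun J => le_refl 0, fun J hJ => absurd rfl hJ, ?_⟩
      funext j
      simp [hzero j]
  | succ c ih =>
      intro ω' hcard hnn hsol
      by_cases hz : ∀ j, ω' j = 0
      · refine ⟨0, fun J => le_refl 0, fun J hJ => absurd rfl hJ, ?_⟩
        funext j
        simp [hz j]
      · push_neg at hz
        -- choose one support point per band
        have hhit : ∀ r, r ≤ m → ∃ j, j ∈ bandR n i r ∧ ω' j ≠ 0 :=
          fun r hr => band_hit hm hx hxy hi0 hin himono hinter ω' hnn hsol hz r hr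
        have hn0 : 0 < n := by omega
        set f : ℕ → Fin n := fun r =>
          if h : r ≤ m then (hhit r h).choose else ⟨0, hn0⟩ with hf
        have hfmem : ∀ r, r ≤ m → f r ∈ bandR n i r ∧ ω' (f r) ≠ 0 := by
          intro r hr
          rw [hf]
          simp only [dif_pos hr]
          exact (hhit r hr).choose_spec
        set J : Finset (Fin n) := (Finset.range (m + 1)).image f with hJdef
        have hinjOn : Set.InjOn f (Finset.range (m + 1)) := by
          intro a ha b hb hab
          rw [Finset.coe_range, Set.mem_Iio] at ha hb
          exact band_unique himono (by omega) (by omega)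
            (hab ▸ (hfmem a (by omega)).1) ((hfmem b (by omega)).1)
        have hcardJ : J.card = m + 1 := by
          rw [hJdef, Finset.card_image_of_injOn hinjOn, Finset.card_range]
        have hJr : ∀ r, r ≤ m → J ∩ bandR n i r = {f r} := by
          intro r hr
          ext j
          rw [Finset.mem_inter, Finset.mem_singleton, hJdef, Finset.mem_image]
          constructor
          · rintro ⟨⟨r', hr', rfl⟩, hjb⟩
            rw [Finset.mem_range] at hr'
            have := band_unique himono (by omega) hr ((hfmem r' (by omega)).1) hjb
            rw [this]
          · rintro rfl
            exact ⟨⟨r, Finset.mem_range.mpr (by omega), rfl⟩, (hfmem r hr).1⟩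
        have hJPlus : JPlusR n m i J := by
          refine ⟨hcardJ, fun r hr => ?_⟩
          rw [hJr r hr, Finset.card_singleton]
        have hJmem : ∀ j ∈ J, 0 < ω' j ∧ 0 < circuitR n m x y J j := by
          intro j hj
          rw [hJdef, Finset.mem_image] at hj
          obtain ⟨r', hr', rfl⟩ := hj
          rw [Finset.mem_range] at hr'
          have h1 := (hfmem r' (by omega)).2
          have hjJ : f r' ∈ J := by
            rw [hJdef]
            exact Finset.mem_image_of_mem f (Finset.mem_range.mpr hr')
          exact ⟨lt_of_le_of_ne (hnn _) (Ne.symm h1),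
            circuit_pos hx hi0 hin himono hinter hJPlus hjJ⟩
        have hJne : J.Nonempty := Finset.card_pos.mp (by omega)
        set lam : ℝ := J.inf' hJne (fun j => ω' j / circuitR n m x y J j) with hlam
        have hlampos : 0 < lam := by
          rw [hlam, Finset.lt_inf'_iff]
          intro j hj
          exact div_pos (hJmem j hj).1 (hJmem j hj).2
        have hlamle : ∀ j ∈ J, lam * circuitR n m x y J j ≤ ω' j := by
          intro j hj
          have h1 : lam ≤ ω' j / circuitR n m x y J j := Finset.inf'_le _ hj
          rw [le_div_iff₀ (hJmem j hj).2] at h1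
          exact h1
        obtain ⟨j₀, hj₀J, hj₀⟩ := Finset.exists_mem_eq_inf' hJne
          (fun j => ω' j / circuitR n m x y J j)
        set ω'' : Fin n → ℝ := fun j => ω' j - lam * circuitR n m x y J j with hω''
        have hnn'' : ∀ j, 0 ≤ ω'' j := by
          intro j
          rw [hω'']
          by_cases hj : j ∈ J
          · simpa using hlamle j hj
          · simp only [circuitR, if_neg hj, mul_zero, sub_zero]
            exact hnn j
        have hω''j₀ : ω'' j₀ = 0 := by
          show ω' j₀ - lam * circuitR n m x y J j₀ = 0
          rw [hlam, hj₀, div_mul_cancel₀ _ (ne_of_gt (hJmem j₀ hj₀J).2), sub_self]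
        have hsupp : Finset.univ.filter (fun j => ω'' j ≠ 0) ⊆
            (Finset.univ.filter (fun j => ω' j ≠ 0)).erase j₀ := by
          intro j hj
          rw [Finset.mem_filter] at hj
          rw [Finset.mem_erase, Finset.mem_filter]
          refine ⟨fun hc => hj.2 (hc ▸ hω''j₀), Finset.mem_univ j, fun hc => ?_⟩
          have hjJ : j ∉ J := fun hjJ => (ne_of_gt (hJmem j hjJ).1) hc
          rw [hω''] at hj
          simp only [circuitR, if_neg hjJ] at hj
          exact hj.2 (by rw [hc]; ring)
        have hcard'' : (Finset.univ.filter (fun j => ω'' j ≠ 0)).card ≤ c := by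
          have h1 : j₀ ∈ Finset.univ.filter (fun j => ω' j ≠ 0) := by
            simp [ne_of_gt (hJmem j₀ hj₀J).1]
          have h2 := Finset.card_le_card hsupp
          rw [Finset.card_erase_of_mem h1] at h2
          omega
        have hsol'' : ∀ k, k < m →
            ∑ j : Fin n, ω'' j * Pm m y (x ((j : ℕ) + 1)) * x ((j : ℕ) + 1) ^ k = 0 := by
          intro k hk
          have hcirc := circuit_solution hx hxy hcardJ k hk
          have : ∀ j : Fin n, ω'' j * Pm m y (x ((j : ℕ) + 1)) * x ((j : ℕ) + 1) ^ k
              = ω' j * Pm m y (x ((j : ℕ) + 1)) * x ((j : ℕ) + 1) ^ k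
                - lam * (circuitR n m x y J j * Pm m y (x ((j : ℕ) + 1)) *
                  x ((j : ℕ) + 1) ^ k) := by
            intro j
            rw [hω'']
            ring
          rw [Finset.sum_congr rfl fun j _ => this j, Finset.sum_sub_distrib,
            hsol k hk, ← Finset.mul_sum, hcirc, mul_zero, sub_zero]
        obtain ⟨t'', ht''nn, ht''sup, ht''eq⟩ := ih ω'' hcard'' hnn'' hsol''
        refine ⟨fun J' => t'' J' + if J' = J then lam else 0, ?_, ?_, ?_⟩
        · intro J'
          by_cases h : J' = J
          · simp only [if_pos h]
            exact add_nonneg (ht''nn J') (le_of_lt hlampos)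
          · simp only [if_neg h, add_zero]
            exact ht''nn J'
        · intro J' hJ'
          by_cases h : J' = J
          · exact h ▸ hJPlus
          · simp only [h, if_false, add_zero] at hJ'
            exact ht''sup J' hJ'
        · have hsplit : ∑ J' : Finset (Fin n),
              (t'' J' + if J' = J then lam else 0) • circuitR n m x y J'
              = (∑ J' : Finset (Fin n), t'' J' • circuitR n m x y J')
                + lam • circuitR n m x y J := by
            have : ∀ J' ∈ Finset.univ,
                (t'' J' + if J' = J then lam else 0) • circuitR n m x y J'
                = t'' J' • circuitR n m x y J'
                  + (if J' = J then lam • circuitR n m x y J' else 0) := by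
              intro J' _
              by_cases h : J' = J <;> simp [h, add_smul]
            rw [Finset.sum_congr rfl this, Finset.sum_add_distrib,
              Finset.sum_ite_eq' Finset.univ J (fun J' => lam • circuitR n m x y J'),
              if_pos (Finset.mem_univ J)]
          rw [hsplit, ← ht''eq]
          funext j
          simp only [Pi.add_apply, Pi.smul_apply, smul_eq_mul, hω'']
          ring

end Setup

/-- under strict interlacing (indices `i`, bands `I_r`), a strictly positive
vector `ω` solves the Vandermonde-type system iff it admits a representation
`ω = ∑_{J ∈ 𝔍₊} t_J ω^{(J)}` with `t_J ≥ 0` such that every index `j` lies in some `J ∈ 𝔍₊`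
with `t_J > 0`. -/
theorem stmt_7 (m n : ℕ) (hm : 1 ≤ m) (hmn : m < n)
    (x y : ℕ → ℝ)
    (hx : ∀ j j', 1 ≤ j → j < j' → j' ≤ n → x j < x j')
    (hy : ∀ k k', 1 ≤ k → k < k' → k' ≤ m → y k < y k')
    (hxy : ∀ j k, 1 ≤ j → j ≤ n → 1 ≤ k → k ≤ m → x j ≠ y k)
    (i : ℕ → ℕ) (hi0 : i 0 = 0) (hin : i (m + 1) = n)
    (himono : ∀ r, r ≤ m → i r < i (r + 1))
    (hinter : ∀ k, 1 ≤ k → k ≤ m → x (i k) < y k ∧ y k < x (i k + 1))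
    (ω : Fin n → ℝ) (hω : ∀ j, 0 < ω j) :
    (∀ k, k < m →
        ∑ j : Fin n, ω j * Pm m y (x ((j : ℕ) + 1)) * x ((j : ℕ) + 1) ^ k = 0)
      ↔ ∃ t : Finset (Fin n) → ℝ,
          (∀ J, 0 ≤ t J) ∧
          (∀ J, t J ≠ 0 → JPlusR n m i J) ∧
          ω = ∑ J : Finset (Fin n), t J • circuitR n m x y J ∧
          ∀ j : Fin n, ∃ J : Finset (Fin n), JPlusR n m i J ∧ j ∈ J ∧ 0 < t J := by
  classical
  constructor
  · intro hsol
    obtain ⟨t, htnn, htsup, hteq⟩ := decomp hm hmn hx hxy hi0 hin himono hinter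
      (Finset.univ.filter (fun j => ω j ≠ 0)).card ω le_rfl (fun j => le_of_lt (hω j)) hsol
    refine ⟨t, htnn, htsup, hteq, fun j => ?_⟩
    have hj : ω j = ∑ J : Finset (Fin n), t J * circuitR n m x y J j := by
      have h := congrFun hteq j
      rw [h, Finset.sum_apply]
      exact Finset.sum_congr rfl fun J _ => by simp [smul_eq_mul]
    have hpos : (∑ J : Finset (Fin n), t J * circuitR n m x y J j) ≠ 0 := by
      rw [← hj]
      exact ne_of_gt (hω j)
    obtain ⟨J, _, hJne⟩ := Finset.exists_ne_zero_of_sum_ne_zero hpos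
    have htJ : t J ≠ 0 := fun h => hJne (by rw [h, zero_mul])
    have hJP := htsup J htJ
    have hcj : circuitR n m x y J j ≠ 0 := fun h => hJne (by rw [h, mul_zero])
    have hjJ : j ∈ J := by
      by_contra hc
      exact hcj (by simp [circuitR, hc])
    exact ⟨J, hJP, hjJ, lt_of_le_of_ne (htnn J) (Ne.symm htJ)⟩
  · rintro ⟨t, htnn, htsup, hteq, -⟩ k hk
    have hterm : ∀ j : Fin n, ω j * Pm m y (x ((j : ℕ) + 1)) * x ((j : ℕ) + 1) ^ k
        = ∑ J : Finset (Fin n),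
            t J * (circuitR n m x y J j * Pm m y (x ((j : ℕ) + 1)) * x ((j : ℕ) + 1) ^ k) := by
      intro j
      have h := congrFun hteq j
      rw [h, Finset.sum_apply, Finset.sum_mul, Finset.sum_mul]
      refine Finset.sum_congr rfl fun J _ => ?_
      simp only [Pi.smul_apply, smul_eq_mul]
      ring
    rw [Finset.sum_congr rfl fun j _ => hterm j, Finset.sum_comm]
    refine Finset.sum_eq_zero fun J _ => ?_
    rw [← Finset.mul_sum]
    by_cases hJ : t J = 0
    · rw [hJ, zero_mul]
    · rw [circuit_solution hx hxy (htsup J hJ).1 k hk, mul_zero]
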